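/- arXiv:math/0501414 — 2 statements merged into one kernel-verified Lean document; each statement's English description precedes it below -/
import Mathlib

section
/- Let b : [0,∞) → (0,∞) be continuous with solution w of w'' + b·w = 0, w(0) = 0, w'(0) = 1 monotone and bounded (an SL-bifurcator). Let c : [0,∞) → (0,∞) be continuous with c(r) ≥ b(r) for all r and c(r₀) > b(r₀) for some r₀. Then the solution y of y'' + c·y = 0, y(0) = 0, y'(0) = 1 has a second zero: there exists r > 0 with y(r) = 0. -/
/-!
Suppose `y` had no zero on `(0, ∞)`; then `y` and `w` are both positive there. The Wronskian
`W = w' y - w y'` vanishes at `0` and satisfies `W' = (c - b) w y ≥ 0`, and `W' > 0` at a point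
where `c > b`, so `W ≥ δ > 0` on some `[a, ∞)`. Since `(y / w)' = -W / w²` and `w` is bounded
by some `M`, the ratio `y / w` decreases at rate at least `δ / M²` on `[a, ∞)`, so it becomes
negative: a contradiction.
-/

open Set Topology

lemma IsPreconnected.forall_lt_of_forall_ne {X α : Type*} [TopologicalSpace X] [LinearOrder α]
    [TopologicalSpace α] [OrderClosedTopology α] {s : Set X} {f : X → α} {c : α}
    (hs : IsPreconnected s) (hf : ContinuousOn f s) (hne : ∀ x ∈ s, f x ≠ c)
    {a : X} (ha : a ∈ s) (hfa : c < f a) : ∀ x ∈ s, c < f x := by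
  intro x hx
  by_contra! hfx
  obtain ⟨z, hz, hfz⟩ := hs.intermediate_value hx ha hf ⟨hfx, hfa.le⟩
  exact hne z hz hfz

section Increasing

variable {f : ℝ → ℝ} {f' x : ℝ}

lemma HasDerivAt.exists_Ioo_lt_of_pos (hf : HasDerivAt f f' x) (hf' : 0 < f') {r : ℝ}
    (hr : x < r) : ∃ t ∈ Ioo x r, f x < f t := by
  have hslope := (hasDerivAt_iff_tendsto_slope_left_right.mp hf).2.eventually (lt_mem_nhds hf')
  obtain ⟨t, hslope_t, ht⟩ := (hslope.and (Ioo_mem_nhdsGT hr)).exists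
  exact ⟨t, ht, (slope_pos_iff_of_le ht.1.le).mp hslope_t⟩

lemma HasDerivAt.forall_lt_of_forall_ne (hf : HasDerivAt f f' x) (hf' : 0 < f')
    (hcont : ContinuousOn f (Ioi x)) (hne : ∀ r > x, f r ≠ f x) : ∀ r > x, f x < f r := by
  obtain ⟨t, ht, hft⟩ := hf.exists_Ioo_lt_of_pos hf' (lt_add_one x)
  exact isPreconnected_Ioi.forall_lt_of_forall_ne hcont hne ht.1 hft

lemma MonotoneOn.forall_lt_of_hasDerivAt_pos (hmono : MonotoneOn f (Ici x))
    (hf : HasDerivAt f f' x) (hf' : 0 < f') : ∀ r > x, f x < f r := fun r hr => by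
  obtain ⟨t, ht, hft⟩ := hf.exists_Ioo_lt_of_pos hf' hr
  exact hft.trans_le (hmono (mem_Ici.2 ht.1.le) (mem_Ici.2 hr.le) ht.2.le)

end Increasing

lemma exists_gt_lt_of_continuousOn_Ici {b c : ℝ → ℝ} {a : ℝ} (hb : ContinuousOn b (Ici a))
    (hc : ContinuousOn c (Ici a)) (h : ∃ r₀, a ≤ r₀ ∧ b r₀ < c r₀) : ∃ r > a, b r < c r := by
  obtain ⟨r₀, hr₀, hbc⟩ := h
  have hpos : ∀ᶠ t in 𝓝[Ici a] r₀, 0 < c t - b t :=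
    ((hc.sub hb) r₀ hr₀).eventually (lt_mem_nhds (sub_pos.mpr hbc))
  have hpos' : ∀ᶠ t in 𝓝[>] r₀, 0 < c t - b t :=
    hpos.filter_mono (nhdsWithin_mono r₀ (Ioi_subset_Ici hr₀))
  obtain ⟨r, hbc_r, hr⟩ := (hpos'.and self_mem_nhdsWithin).exists
  exact ⟨r, hr₀.trans_lt hr, sub_pos.mp hbc_r⟩

lemma exists_lt_zero_of_hasDerivAt_le_neg {g g' : ℝ → ℝ} {a κ : ℝ} (hκ : 0 < κ)
    (hg : ∀ x ≥ a, HasDerivAt g (g' x) x) (hg' : ∀ x ≥ a, g' x ≤ -κ) : ∃ x ≥ a, g x < 0 := by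
  have hcont : ContinuousOn g (Ici a) := fun x hx => (hg x hx).continuousAt.continuousWithinAt
  have hdiff : DifferentiableOn ℝ g (interior (Ici a)) := fun x hx =>
    (hg x (interior_subset hx)).differentiableAt.differentiableWithinAt
  have hbound : ∀ x ∈ interior (Ici a), deriv g x ≤ -κ := fun x hx => by
    rw [(hg x (interior_subset hx)).deriv]
    exact hg' x (interior_subset hx)
  set R := a + |g a| / κ + 1
  have hR : a ≤ R := by simp only [R]; linarith [div_nonneg (abs_nonneg (g a)) hκ.le]
  have hdecay := (convex_Ici a).image_sub_le_mul_sub_of_deriv_le hcont hdiff hbound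
    a (mem_Ici.2 le_rfl) R hR hR
  have hκR : κ * (R - a) = |g a| + κ := by simp only [R]; field_simp; ring
  exact ⟨R, hR, by linarith [le_abs_self (g a)]⟩

noncomputable def wronskian (u v : ℝ → ℝ) : ℝ → ℝ := fun r => deriv u r * v r - u r * deriv v r

section Wronskian

variable {u v : ℝ → ℝ}

lemma hasDerivAt_wronskian (hu : ContDiff ℝ 2 u) (hv : ContDiff ℝ 2 v) (r : ℝ) :
    HasDerivAt (wronskian u v) (deriv (deriv u) r * v r - u r * deriv (deriv v) r) r := by
  have hu' := (hu.differentiable_deriv_two r).hasDerivAt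
  have hv' := (hv.differentiable_deriv_two r).hasDerivAt
  have hu₀ := (hu.differentiable (by norm_num) r).hasDerivAt
  have hv₀ := (hv.differentiable (by norm_num) r).hasDerivAt
  exact ((hu'.mul hv₀).sub (hu₀.mul hv')).congr_deriv (by ring)

lemma hasDerivAt_wronskian_of_ode (hu : ContDiff ℝ 2 u) (hv : ContDiff ℝ 2 v) {p q r : ℝ}
    (hu'' : deriv (deriv u) r + p * u r = 0) (hv'' : deriv (deriv v) r + q * v r = 0) :
    HasDerivAt (wronskian u v) ((q - p) * (u r * v r)) r := by
  convert hasDerivAt_wronskian hu hv r using 1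
  linear_combination u r * hv'' - v r * hu''

lemma monotoneOn_wronskian_of_ode (hu : ContDiff ℝ 2 u) (hv : ContDiff ℝ 2 v) {p q : ℝ → ℝ}
    {a : ℝ} (hu'' : ∀ r > a, deriv (deriv u) r + p r * u r = 0)
    (hv'' : ∀ r > a, deriv (deriv v) r + q r * v r = 0) (hpq : ∀ r > a, p r ≤ q r)
    (huv : ∀ r > a, 0 ≤ u r * v r) : MonotoneOn (wronskian u v) (Ici a) := by
  refine monotoneOn_of_deriv_nonneg (convex_Ici a)
    (fun r _ => (hasDerivAt_wronskian hu hv r).continuousAt.continuousWithinAt)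
    (fun r _ => (hasDerivAt_wronskian hu hv r).differentiableAt.differentiableWithinAt)
    fun r hr => ?_
  rw [interior_Ici] at hr
  rw [(hasDerivAt_wronskian_of_ode hu hv (hu'' r hr) (hv'' r hr)).deriv]
  exact mul_nonneg (sub_nonneg.mpr (hpq r hr)) (huv r hr)

lemma hasDerivAt_div_wronskian {r : ℝ} (hu : DifferentiableAt ℝ u r)
    (hv : DifferentiableAt ℝ v r) (hur : u r ≠ 0) :
    HasDerivAt (fun t => v t / u t) (-wronskian u v r / u r ^ 2) r := by
  refine (hv.hasDerivAt.div hu.hasDerivAt hur).congr_deriv ?_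
  simp only [wronskian]
  ring

lemma exists_lt_zero_of_le_wronskian (hu : Differentiable ℝ u) (hv : Differentiable ℝ v)
    {a M δ : ℝ} (hu_pos : ∀ r ≥ a, 0 < u r) (hu_le : ∀ r ≥ a, u r ≤ M) (hδ : 0 < δ)
    (hW : ∀ r ≥ a, δ ≤ wronskian u v r) : ∃ r ≥ a, v r < 0 := by
  have hM : 0 < M := (hu_pos a le_rfl).trans_le (hu_le a le_rfl)
  obtain ⟨r, hr, hvu⟩ := exists_lt_zero_of_hasDerivAt_le_neg (div_pos hδ (pow_pos hM 2))
    (fun r hr => hasDerivAt_div_wronskian (hu r) (hv r) (hu_pos r hr).ne') fun r hr => by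
      have hsq : u r ^ 2 ≤ M ^ 2 := pow_le_pow_left₀ (hu_pos r hr).le (hu_le r hr) 2
      rw [neg_div, neg_le_neg_iff]
      exact div_le_div₀ (hδ.le.trans (hW r hr)) (hW r hr) (pow_pos (hu_pos r hr) 2) hsq
  exact ⟨r, hr, by simpa using (div_lt_iff₀ (hu_pos r hr)).mp hvu⟩

end Wronskian

theorem stmt_7_general (b c w y : ℝ → ℝ)
    (hb_cont : ContinuousOn b (Set.Ici 0))
    (hc_cont : ContinuousOn c (Set.Ici 0))
    (hw : ContDiff ℝ 2 w)
    (hwode : ∀ r : ℝ, 0 ≤ r → deriv (deriv w) r + b r * w r = 0)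
    (hw0 : w 0 = 0) (hw0' : deriv w 0 = 1)
    (hwmono : MonotoneOn w (Set.Ici 0))
    (hwbdd : BddAbove (w '' Set.Ici 0))
    (hcb : ∀ r : ℝ, 0 ≤ r → b r ≤ c r)
    (hstrict : ∃ r₀ : ℝ, 0 ≤ r₀ ∧ b r₀ < c r₀)
    (hy : ContDiff ℝ 2 y)
    (hyode : ∀ r : ℝ, 0 ≤ r → deriv (deriv y) r + c r * y r = 0)
    (hy0 : y 0 = 0) (hy0' : deriv y 0 = 1) :
    ∃ r : ℝ, 0 < r ∧ y r = 0 := by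
  by_contra! hy_ne
  have hwd := hw.differentiable (by norm_num)
  have hyd := hy.differentiable (by norm_num)
  have hy_deriv : HasDerivAt y 1 0 := hy0' ▸ (hyd 0).hasDerivAt
  have hw_deriv : HasDerivAt w 1 0 := hw0' ▸ (hwd 0).hasDerivAt
  have hy_pos : ∀ r > 0, 0 < y r := fun r hr => hy0.symm.trans_lt <|
    hy_deriv.forall_lt_of_forall_ne one_pos hyd.continuous.continuousOn
      (fun t ht => (hy_ne t ht).trans_eq hy0.symm) r hr
  have hw_pos : ∀ r > 0, 0 < w r := fun r hr => hw0.symm.trans_lt <|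
    hwmono.forall_lt_of_hasDerivAt_pos hw_deriv one_pos r hr
  have hW_mono : MonotoneOn (wronskian w y) (Ici 0) :=
    monotoneOn_wronskian_of_ode hw hy (fun r hr => hwode r hr.le) (fun r hr => hyode r hr.le)
      (fun r hr => hcb r hr.le) fun r hr => (mul_pos (hw_pos r hr) (hy_pos r hr)).le
  obtain ⟨r₁, hr₁, hbc⟩ := exists_gt_lt_of_continuousOn_Ici hb_cont hc_cont hstrict
  obtain ⟨a, ha, hWa⟩ := (hasDerivAt_wronskian_of_ode hw hy (hwode r₁ hr₁.le)
      (hyode r₁ hr₁.le)).exists_Ioo_lt_of_pos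
    (mul_pos (sub_pos.mpr hbc) (mul_pos (hw_pos r₁ hr₁) (hy_pos r₁ hr₁))) (lt_add_one r₁)
  have ha₀ : 0 < a := hr₁.trans ha.1
  have hW_pos : 0 < wronskian w y a := by
    have hW₀ : wronskian w y 0 = 0 := by simp [wronskian, hw0, hy0]
    linarith [hW_mono (mem_Ici.2 le_rfl) hr₁.le hr₁.le]
  obtain ⟨M, hM⟩ := hwbdd
  obtain ⟨R, hR, hyR⟩ := exists_lt_zero_of_le_wronskian hwd hyd
    (fun r hr => hw_pos r (ha₀.trans_le hr)) (fun r hr => hM ⟨r, (ha₀.trans_le hr).le, rfl⟩)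
    hW_pos fun r hr => hW_mono ha₀.le (ha₀.trans_le hr).le hr
  exact (hy_pos R (ha₀.trans_le hR)).not_gt hyR

/-- Boundary Theorem (comparison step): if `b` is an SL-bifurcator (the solution `w` of
`w'' + b w = 0`, `w 0 = 0`, `w' 0 = 1` is monotone and bounded) and `c ≥ b` is continuous
and positive with `c r₀ > b r₀` somewhere, then the solution `y` of `y'' + c y = 0`,
`y 0 = 0`, `y' 0 = 1` has a second zero. -/
theorem stmt_7 (b c w y : ℝ → ℝ)
    (hb_cont : ContinuousOn b (Set.Ici 0))
    (hb_pos : ∀ r : ℝ, 0 ≤ r → 0 < b r)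
    (hc_cont : ContinuousOn c (Set.Ici 0))
    (hc_pos : ∀ r : ℝ, 0 ≤ r → 0 < c r)
    (hw : ContDiff ℝ 2 w)
    (hwode : ∀ r : ℝ, 0 ≤ r → deriv (deriv w) r + b r * w r = 0)
    (hw0 : w 0 = 0) (hw0' : deriv w 0 = 1)
    (hwmono : MonotoneOn w (Set.Ici 0))
    (hwbdd : BddAbove (w '' Set.Ici 0))
    (hcb : ∀ r : ℝ, 0 ≤ r → b r ≤ c r)
    (hstrict : ∃ r₀ : ℝ, 0 ≤ r₀ ∧ b r₀ < c r₀)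
    (hy : ContDiff ℝ 2 y)
    (hyode : ∀ r : ℝ, 0 ≤ r → deriv (deriv y) r + c r * y r = 0)
    (hy0 : y 0 = 0) (hy0' : deriv y 0 = 1) :
    ∃ r : ℝ, 0 < r ∧ y r = 0 :=
  stmt_7_general b c w y hb_cont hc_cont hw hwode hw0 hw0' hwmono hwbdd hcb hstrict hy hyode hy0
    hy0'
end

section
/- Let b : [0,∞) → (0,∞) be continuous such that the solution w of w'' + b·w = 0, w(0)=0, w'(0)=1 is monotone and bounded. Then ∫₀^∞ r·b(r) dr < ∞. -/
open Set MeasureTheory Filter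

/-!
The quantity `g r = w r - r w'(r)` satisfies `g' = -r w'' = r b w ≥ 0`, and `g ≤ w` is bounded
because `w' ≥ 0`; a nonnegative derivative of a bounded function is integrable, so `r b w` is
integrable on `(0, ∞)`. Since `w'(0) = 1`, `w` is positive at some `c > 0`, hence `w ≥ w c > 0`
on `(c, ∞)`, which transfers the integrability to `r b`; on `(0, c]` it is continuous.
-/

theorem HasDerivAt.exists_gt_of_pos {f : ℝ → ℝ} {f' x : ℝ} (hf : HasDerivAt f f' x)
    (hf' : 0 < f') : ∃ c > x, f x < f c := by
  obtain ⟨t, hslope, ht⟩ :=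
    ((hf.tendsto_slope_zero_right.eventually (lt_mem_nhds hf')).and self_mem_nhdsWithin).exists
  refine ⟨x + t, by linarith, ?_⟩
  rw [smul_eq_mul] at hslope
  nlinarith [inv_pos.mpr ht]

theorem integrableOn_Ioi_deriv_of_nonneg_of_bounded {g g' : ℝ → ℝ} {a M : ℝ}
    (hderiv : ∀ x ∈ Ici a, HasDerivAt g (g' x) x) (g'pos : ∀ x ∈ Ioi a, 0 ≤ g' x)
    (hM : ∀ x ∈ Ioi a, g x ≤ M) : IntegrableOn g' (Ioi a) := by
  have hcont : ContinuousOn g (Ici a) := fun x hx =>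
    (hderiv x hx).continuousAt.continuousWithinAt
  have hint : ∀ R, IntegrableOn g' (Ioc a R) := fun R =>
    intervalIntegral.integrableOn_deriv_of_nonneg (hcont.mono Icc_subset_Ici_self)
      (fun x hx => hderiv x (mem_Ici.mpr hx.1.le)) fun x hx => g'pos x hx.1
  refine integrableOn_Ioi_of_intervalIntegral_norm_bounded (M - g a) a hint tendsto_id ?_
  filter_upwards [Ioi_mem_atTop a] with R hR
  have haR : a ≤ R := le_of_lt hR
  calc ∫ x in a..R, ‖g' x‖ = ∫ x in a..R, g' x := by
        simp_rw [intervalIntegral.integral_of_le haR]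
        exact setIntegral_congr_fun measurableSet_Ioc fun x hx =>
          Real.norm_of_nonneg (g'pos x hx.1)
    _ = g R - g a :=
        intervalIntegral.integral_eq_sub_of_hasDerivAt_of_le haR
          (hcont.mono Icc_subset_Ici_self) (fun x hx => hderiv x (mem_Ici.mpr hx.1.le))
          ((intervalIntegrable_iff_integrableOn_Ioc_of_le haR).mpr (hint R))
    _ ≤ M - g a := by linarith [hM R hR]

theorem IntegrableOn.of_mul_of_le {α : Type*} [MeasurableSpace α] {μ : Measure α}
    {f h : α → ℝ} {s : Set α} {m : ℝ} (hs : MeasurableSet s) (hm : 0 < m)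
    (hf : AEStronglyMeasurable f (μ.restrict s)) (hfh : IntegrableOn (fun x => f x * h x) s μ)
    (hh : ∀ x ∈ s, m ≤ h x) : IntegrableOn f s μ := by
  refine (hfh.norm.const_mul m⁻¹).mono' hf ?_
  rw [ae_restrict_iff' hs]
  filter_upwards with x hx
  have hhx : (0 : ℝ) ≤ h x := hm.le.trans (hh x hx)
  rw [norm_mul, Real.norm_of_nonneg hhx, le_inv_mul_iff₀ hm, mul_comm m]
  exact mul_le_mul_of_nonneg_left (hh x hx) (norm_nonneg _)

theorem hasDerivAt_sub_mul_deriv {w : ℝ → ℝ} (hw : ContDiff ℝ 2 w) (r : ℝ) :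
    HasDerivAt (fun r => w r - r * deriv w r) (-(r * deriv (deriv w) r)) r :=
  (((hw.differentiable two_ne_zero) r).hasDerivAt.fun_sub
    ((hasDerivAt_id' r).fun_mul (hw.differentiable_deriv_two r).hasDerivAt)).congr_deriv (by ring)

/-- If `b : [0,∞) → (0,∞)` is a continuous SL-bifurcator (the solution `w` of
`w'' + b w = 0`, `w 0 = 0`, `w' 0 = 1` is monotone and bounded), then
`∫₀^∞ r b(r) dr < ∞`. -/
theorem stmt_10 (b w : ℝ → ℝ)
    (hb_cont : ContinuousOn b (Set.Ici 0))
    (hb_pos : ∀ r : ℝ, 0 ≤ r → 0 < b r)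
    (hw : ContDiff ℝ 2 w)
    (hode : ∀ r : ℝ, 0 ≤ r → deriv (deriv w) r + b r * w r = 0)
    (h0 : w 0 = 0) (h0' : deriv w 0 = 1)
    (hmono : MonotoneOn w (Set.Ici 0))
    (hbdd : BddAbove (w '' Set.Ici 0)) :
    MeasureTheory.IntegrableOn (fun r : ℝ => r * b r) (Set.Ioi 0) := by
  have hw_diff : Differentiable ℝ w := hw.differentiable two_ne_zero
  have hw_nonneg : ∀ r : ℝ, 0 ≤ r → 0 ≤ w r := fun r hr => h0 ▸ hmono self_mem_Ici hr hr
  have hw'_nonneg : ∀ r : ℝ, 0 ≤ r → 0 ≤ deriv w r := fun r hr =>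
    (hw_diff r).hasDerivAt.hasDerivWithinAt.nonneg_of_monotoneOn
      (uniqueDiffWithinAt_iff_accPt.mp (uniqueDiffOn_Ici 0 r hr)) hmono
  obtain ⟨M, hM⟩ := hbdd
  have hrbw : IntegrableOn (fun r => r * b r * w r) (Ioi 0) := by
    refine integrableOn_Ioi_deriv_of_nonneg_of_bounded (g := fun r => w r - r * deriv w r) (M := M)
      (fun r hr => ?_) (fun r hr => ?_) (fun r hr => ?_)
    · convert hasDerivAt_sub_mul_deriv hw r using 1
      linear_combination r * hode r hr
    · exact mul_nonneg (mul_nonneg hr.le (hb_pos r hr.le).le) (hw_nonneg r hr.le)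
    · calc w r - r * deriv w r ≤ w r := sub_le_self _ (mul_nonneg hr.le (hw'_nonneg r hr.le))
        _ ≤ M := hM ⟨r, mem_Ici.mpr (le_of_lt hr), rfl⟩
  obtain ⟨c, hc, hwc⟩ := (h0' ▸ (hw_diff 0).hasDerivAt).exists_gt_of_pos one_pos
  have hrb_cont : ContinuousOn (fun r => r * b r) (Ici 0) := continuousOn_id.mul hb_cont
  rw [← Ioc_union_Ioi_eq_Ioi hc.le]
  refine IntegrableOn.union ?_ ?_
  · exact ((hrb_cont.mono Icc_subset_Ici_self).integrableOn_Icc).mono_set Ioc_subset_Icc_self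
  · exact IntegrableOn.of_mul_of_le measurableSet_Ioi (h0 ▸ hwc)
      ((hrb_cont.mono fun r hr => le_of_lt (hc.trans hr)).aestronglyMeasurable measurableSet_Ioi)
      (hrbw.mono_set (Ioi_subset_Ioi hc.le)) fun r hr => hmono hc.le (hc.trans hr).le hr.le
end
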